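/- Let C be an odd cycle of length 2m+1 in a graph G with edge ideal I(G). Then the square of the product of the vertices of C lies in I(G)^{2m+1}; that is, (x_{i_1} ⋯ x_{i_{2m+1}})^2 ∈ I(G)^{2m+1}. -/

import Mathlib

open MvPolynomial

noncomputable section

/-- The integral closure of an ideal `I`: an element `r` belongs to it iff `r·t` is
integral over the Rees algebra `R[It]` inside `R[t]`; equivalently, `r` satisfies an
equation `r^n + a₁ r^{n-1} + ⋯ + aₙ = 0` with `aᵢ ∈ Iⁱ`. -/
def Ideal.intCl {R : Type*} [CommRing R] (I : Ideal R) : Ideal R where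
  carrier := {r | (Polynomial.C r * Polynomial.X : Polynomial R) ∈
      integralClosure (reesAlgebra I) (Polynomial R)}
  zero_mem' := by
    simp only [Set.mem_setOf_eq, map_zero, zero_mul]
    exact Subalgebra.zero_mem _
  add_mem' := by
    intro a b ha hb
    simp only [Set.mem_setOf_eq, map_add, add_mul] at ha hb ⊢
    exact Subalgebra.add_mem _ ha hb
  smul_mem' := by
    intro c x hx
    simp only [Set.mem_setOf_eq] at hx ⊢
    have hmem : (Polynomial.C c : Polynomial R) ∈ reesAlgebra I := by
      rw [← Polynomial.algebraMap_eq]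
      exact Subalgebra.algebraMap_mem _ c
    have hc : (Polynomial.C c : Polynomial R) ∈
        integralClosure (reesAlgebra I) (Polynomial R) := by
      simpa using Subalgebra.algebraMap_mem
        (integralClosure (reesAlgebra I) (Polynomial R)) (⟨Polynomial.C c, hmem⟩ : reesAlgebra I)
    have heq : Polynomial.C (c • x) * Polynomial.X
        = Polynomial.C c * (Polynomial.C x * Polynomial.X) := by
      rw [smul_eq_mul, Polynomial.C_mul, mul_assoc]
    rw [heq]
    exact mul_mem hc hx

/-- The `s`-th symbolic power of an ideal, as the intersection of the `s`-th powers of its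
minimal primes (the appropriate definition for radical, e.g. squarefree monomial, ideals). -/
def Ideal.symbPow {R : Type*} [CommRing R] (I : Ideal R) (s : ℕ) : Ideal R :=
  ⨅ p ∈ I.minimalPrimes, p ^ s

section Koszul

variable (k : Type*) [Field k] (σ : Type*) [Fintype σ] [LinearOrder σ]

/-- The Koszul differential (on the Koszul complex of the variables, with coefficients in
the polynomial ring). -/
def koszulD : ∀ i : ℕ,
    (({s : Finset σ // s.card = i} → MvPolynomial σ k) →ₗ[k]
      ({s : Finset σ // s.card = i - 1} → MvPolynomial σ k))
  | 0 => 0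
  | (i + 1) =>
    LinearMap.pi fun t : {s : Finset σ // s.card = i} =>
      ∑ x ∈ (t.1ᶜ).attach,
        ((-1 : k) ^ ((t.1.filter (fun a => a < x.1)).card)) •
          ((LinearMap.mulLeft k (X x.1 : MvPolynomial σ k)).comp
            (LinearMap.proj (⟨insert x.1 t.1, by
              rw [Finset.card_insert_of_notMem (Finset.mem_compl.mp x.2), t.2]⟩ :
                {s : Finset σ // s.card = i + 1})))

variable {k σ}

/-- The degree `j` strand of homological degree `i` of the Koszul complex with coefficients
in the ideal `I`. -/
def koszulStrand (I : Ideal (MvPolynomial σ k)) (i j : ℕ) :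
    Submodule k ({s : Finset σ // s.card = i} → MvPolynomial σ k) :=
  if i ≤ j then
    Submodule.pi Set.univ fun _ =>
      (Submodule.restrictScalars k (I : Submodule (MvPolynomial σ k) (MvPolynomial σ k))) ⊓
        homogeneousSubmodule σ k (j - i)
  else ⊥

/-- The degree `j` cycles in homological degree `i` of the Koszul complex with values in `I`. -/
def koszulCycles (I : Ideal (MvPolynomial σ k)) (i j : ℕ) :
    Submodule k ({s : Finset σ // s.card = i} → MvPolynomial σ k) :=
  koszulStrand I i j ⊓ LinearMap.ker (koszulD k σ i)

/-- The graded Betti number `β_{i,j}(I) = dim_k (Tor_i(I,k))_j`, computed via the Koszul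
complex. -/
def gradedBetti (I : Ideal (MvPolynomial σ k)) (i j : ℕ) : Cardinal :=
  Module.rank k
    ((↥(koszulCycles I i j)) ⧸
      (Submodule.comap (koszulCycles I i j).subtype
        (Submodule.map (koszulD k σ (i + 1)) (koszulStrand I (i + 1) j))))

/-- The Castelnuovo–Mumford regularity of an ideal: `max { j - i : β_{i,j}(I) ≠ 0 }`. -/
def reg (I : Ideal (MvPolynomial σ k)) : ℤ :=
  sSup {d : ℤ | ∃ i j : ℕ, gradedBetti I i j ≠ 0 ∧ d = (j : ℤ) - (i : ℤ)}

end Koszul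

section Graphs

variable (k : Type*) [Field k] {V : Type*}

/-- The edge ideal of a graph. -/
def edgeIdeal (G : SimpleGraph V) : Ideal (MvPolynomial V k) :=
  Ideal.span {p | ∃ u v, G.Adj u v ∧ p = X u * X v}

/-- The edge ideal of the induced subgraph of `G` on a set `S` of vertices. -/
def edgeIdealOn (G : SimpleGraph V) (S : Set V) : Ideal (MvPolynomial V k) :=
  Ideal.span {p | ∃ u v, G.Adj u v ∧ u ∈ S ∧ v ∈ S ∧ p = X u * X v}

variable {k}

/-- A cycle of length `m` in `G`, given by an injective map from `ZMod m` whose consecutive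
values are adjacent. -/
def IsCycleMap (G : SimpleGraph V) (m : ℕ) (c : ZMod m → V) : Prop :=
  Function.Injective c ∧ ∀ i, G.Adj (c i) (c (i + 1))

/-- An induced cycle: a cycle with no chords. -/
def IsInducedCycleMap (G : SimpleGraph V) (m : ℕ) (c : ZMod m → V) : Prop :=
  IsCycleMap G m c ∧ ∀ i j : ZMod m, G.Adj (c i) (c j) → j = i + 1 ∨ i = j + 1

/-- A bow in `G`: two (odd) cycles which are vertex-disjoint and at distance at least two
(no edge between them). -/
def IsBow (G : SimpleGraph V) {p q : ℕ} (c₁ : ZMod p → V) (c₂ : ZMod q → V) : Prop :=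
  IsCycleMap G p c₁ ∧ IsCycleMap G q c₂ ∧ (∀ i j, c₁ i ≠ c₂ j) ∧
    ∀ i j, ¬ G.Adj (c₁ i) (c₂ j)

/-- The induced matching number of the induced subgraph of `G` on the vertex set `S`. -/
def inducedMatchingNumber (G : SimpleGraph V) (S : Set V) : ℕ :=
  sSup {r | ∃ M : Finset (V × V), M.card = r ∧
    (∀ e ∈ M, e.1 ∈ S ∧ e.2 ∈ S ∧ G.Adj e.1 e.2) ∧
    ∀ e ∈ M, ∀ f ∈ M, e ≠ f →
      ∀ u ∈ ({e.1, e.2} : Set V), ∀ w ∈ ({f.1, f.2} : Set V), u ≠ w ∧ ¬ G.Adj u w}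

/-- The vertex cover number of a graph. -/
def coverNumber [Fintype V] (G : SimpleGraph V) : ℕ :=
  sInf {r | ∃ C : Finset V, C.card = r ∧ ∀ u v, G.Adj u v → u ∈ C ∨ v ∈ C}

/-- The parallelization `G^v` of a graph `G`: the vertex `i` is deleted when `v i = 0` and
duplicated `v i - 1` times when `v i ≥ 1`. -/
def parallelization (G : SimpleGraph V) (v : V → ℕ) : SimpleGraph ((i : V) × Fin (v i)) where
  Adj a b := G.Adj a.1 b.1
  symm := ⟨fun _ _ h => h.symm⟩
  loopless := ⟨fun a h => G.irrefl h⟩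

end Graphs

theorem Ideal.prod_mem_pow_card {R ι : Type*} [CommSemiring R] [Fintype ι] {I : Ideal R}
    {f : ι → R} (hf : ∀ i, f i ∈ I) : ∏ i, f i ∈ I ^ Fintype.card ι := by
  simpa using Ideal.prod_mem_prod (s := Finset.univ) (I := fun _ => I) fun i _ => hf i

theorem Equiv.Perm.sq_prod_eq_prod_mul_comp {M ι : Type*} [CommMonoid M] [Fintype ι]
    (σ : Equiv.Perm ι) (f : ι → M) : (∏ i, f i) ^ 2 = ∏ i, f i * f (σ i) := by
  rw [Finset.prod_mul_distrib, Equiv.prod_comp σ f, sq]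

theorem X_mul_X_mem_edgeIdeal (k : Type*) [Field k] {V : Type*} {G : SimpleGraph V} {u v : V}
    (h : G.Adj u v) : (X u * X v : MvPolynomial V k) ∈ edgeIdeal k G :=
  Ideal.subset_span ⟨u, v, h, rfl⟩

theorem sq_prod_X_mem_edgeIdeal_pow (k : Type*) [Field k] {V : Type*} {G : SimpleGraph V}
    {n : ℕ} [NeZero n] {c : ZMod n → V} (hc : ∀ i, G.Adj (c i) (c (i + 1))) :
    (∏ i, X (c i) : MvPolynomial V k) ^ 2 ∈ edgeIdeal k G ^ n := by
  rw [(Equiv.addRight 1).sq_prod_eq_prod_mul_comp]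
  simpa only [ZMod.card, Equiv.coe_addRight] using
    Ideal.prod_mem_pow_card fun i => X_mul_X_mem_edgeIdeal k (hc i)

/-- For an odd cycle `C` of length `2m+1` in `G`, the square of the product of the
vertices of `C` lies in `I(G)^{2m+1}`. -/
theorem stmt3 (k : Type*) [Field k] {V : Type*} (G : SimpleGraph V) (m : ℕ)
    (c : ZMod (2 * m + 1) → V) (hc : IsCycleMap G (2 * m + 1) c) :
    ((∏ i : ZMod (2 * m + 1), X (c i) : MvPolynomial V k)) ^ 2 ∈ edgeIdeal k G ^ (2 * m + 1) :=
  sq_prod_X_mem_edgeIdeal_pow k hc.2
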